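/- Suppose Λ_∘ is Hermitian with G*Λ_∘G > 0 on the unit circle and ∫ G (Ψ/(G*Λ_∘G)) G* = I (the normalized moment condition). Then tr(Λ_∘) = ∫ Ψ; in particular if ∫Ψ = 1 then tr(Λ_∘) = 1. -/

import Mathlib

open Matrix MeasureTheory Real Filter
open scoped ComplexOrder

noncomputable section

abbrev Mat (n : ℕ) := Matrix (Fin n) (Fin n) ℂ
abbrev Vec (n : ℕ) := Matrix (Fin n) (Fin 1) ℂ

/-- the point e^{jθ} on the unit circle -/
def circPt (θ : ℝ) : ℂ := Complex.exp (θ * Complex.I)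

/-- G(e^{jθ}) = (e^{jθ} I - A)⁻¹ B -/
def Gm {n : ℕ} (A : Mat n) (B : Vec n) (θ : ℝ) : Vec n :=
  (circPt θ • (1 : Mat n) - A)⁻¹ * B

/-- the scalar G* Λ G at e^{jθ} -/
def quad {n : ℕ} (A : Mat n) (B : Vec n) (Λ : Mat n) (θ : ℝ) : ℂ :=
  ((Gm A B θ)ᴴ * Λ * Gm A B θ) 0 0

/-- normalized entrywise matrix integral over the unit circle -/
def mInt {n : ℕ} (f : ℝ → Mat n) : Mat n :=
  Matrix.of fun i j => (1 / (2 * π) : ℝ) • ∫ θ in (0:ℝ)..(2 * π), f θ i j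

/-- normalized scalar (complex) integral over the unit circle -/
def sInt (f : ℝ → ℂ) : ℂ := (1 / (2 * π) : ℝ) • ∫ θ in (0:ℝ)..(2 * π), f θ

/-- normalized scalar (real) integral over the unit circle -/
def sIntR (f : ℝ → ℝ) : ℝ := (1 / (2 * π)) * ∫ θ in (0:ℝ)..(2 * π), f θ

/-- all eigenvalues of A lie in the open unit disc -/
def IsStable {n : ℕ} (A : Mat n) : Prop := ∀ μ ∈ spectrum ℂ A, ‖μ‖ < 1

/-- (A,B) is a reachable pair: the controllability matrix has full rank -/
def Reachable {n : ℕ} (A : Mat n) (B : Vec n) : Prop :=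
  (Matrix.of fun (i : Fin n) (k : Fin n) => (A ^ (k : ℕ) * B) i 0).rank = n

open scoped Classical in
/-- positive semidefinite square root (junk value 0 off the psd cone) -/
def msqrt {n : ℕ} (M : Mat n) : Mat n :=
  if h : M.PosSemidef then
    (h.1.eigenvectorUnitary : Mat n) * diagonal ((↑) ∘ Real.sqrt ∘ h.1.eigenvalues) *
      (star h.1.eigenvectorUnitary : Mat n) else 0

/-- the moment map ∫ G (Ψ/(G*ΛG)) G* -/
def moment {n : ℕ} (A : Mat n) (B : Vec n) (Ψ : ℝ → ℝ) (Λ : Mat n) : Mat n :=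
  mInt (fun θ => ((Ψ θ : ℂ) / quad A B Λ θ) • (Gm A B θ * (Gm A B θ)ᴴ))

/-- the iteration map Θ(Λ) = ∫ Λ^{1/2} G (Ψ/(G*ΛG)) G* Λ^{1/2} -/
def Theta {n : ℕ} (A : Mat n) (B : Vec n) (Ψ : ℝ → ℝ) (Λ : Mat n) : Mat n :=
  mInt (fun θ => ((Ψ θ : ℂ) / quad A B Λ θ) •
    (msqrt Λ * (Gm A B θ * (Gm A B θ)ᴴ) * msqrt Λ))

/-- the linearization M of Θ at Λ:
M(X) = X - Λ^{1/2} ∫ (GΨG*/(G*ΛG)) (G*XG/(G*ΛG)) Λ^{1/2} -/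
def Mlin {n : ℕ} (A : Mat n) (B : Vec n) (Ψ : ℝ → ℝ) (Λ : Mat n) (X : Mat n) : Mat n :=
  X - msqrt Λ * mInt (fun θ =>
    (((Ψ θ : ℂ) * (((Gm A B θ)ᴴ * X * Gm A B θ) 0 0)) / (quad A B Λ θ) ^ 2) •
      (Gm A B θ * (Gm A B θ)ᴴ)) * msqrt Λ

/-- the range of the operator Γ : Φ ↦ ∫ G Φ G* on continuous (2π-periodic) functions -/
def RangeGamma {n : ℕ} (A : Mat n) (B : Vec n) : Set (Mat n) :=
  {M | ∃ Φ : ℝ → ℝ, Continuous Φ ∧ (∀ θ, Φ (θ + 2 * π) = Φ θ) ∧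
    M = mInt (fun θ => (Φ θ : ℂ) • (Gm A B θ * (Gm A B θ)ᴴ))}


/-! Multiply the moment condition on the left by `Λ` and take traces. Pointwise,
`tr (Λ G G*) = G* Λ G`, which cancels the denominator of the integrand, so what remains is
the integral of `Ψ`. Stability of `A` makes `G` continuous on the circle, which lets the trace
move inside the integral. -/

lemma norm_circPt (θ : ℝ) : ‖circPt θ‖ = 1 := by
  simp [circPt]

lemma continuous_circPt : Continuous circPt := by
  unfold circPt
  fun_prop

lemma isUnit_det_circPt_smul_one_sub {n : ℕ} {A : Mat n} (hA : IsStable A) (θ : ℝ) :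
    IsUnit (circPt θ • (1 : Mat n) - A).det := by
  rw [← Matrix.isUnit_iff_isUnit_det, ← Algebra.algebraMap_eq_smul_one]
  by_contra h
  exact (hA _ h).ne (norm_circPt θ)

lemma continuous_Gm {n : ℕ} {A : Mat n} (hA : IsStable A) (B : Vec n) : Continuous (Gm A B) := by
  have hM : Continuous fun θ => circPt θ • (1 : Mat n) - A :=
    (continuous_circPt.smul continuous_const).sub continuous_const
  refine Continuous.matrix_mul ?_ continuous_const
  refine continuous_iff_continuousAt.2 fun θ =>
    (continuousAt_matrix_inv _ ?_).comp hM.continuousAt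
  have hu := isUnit_det_circPt_smul_one_sub hA θ
  exact hu.unit_spec ▸ NormedRing.inverse_continuousAt hu.unit

lemma continuous_quad {n : ℕ} {A : Mat n} (hA : IsStable A) (B : Vec n) (Λ : Mat n) :
    Continuous (quad A B Λ) :=
  have hG := continuous_Gm hA B
  ((hG.matrix_conjTranspose.matrix_mul continuous_const).matrix_mul hG).matrix_elem 0 0

lemma trace_mul_mInt {n : ℕ} (Λ : Mat n) {f : ℝ → Mat n}
    (hf : ∀ i j, IntervalIntegrable (fun θ => f θ i j) volume 0 (2 * π)) :
    (Λ * mInt f).trace = sInt fun θ => (Λ * f θ).trace := by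
  simp only [Matrix.trace, Matrix.diag, Matrix.mul_apply, mInt, sInt, Matrix.of_apply,
    mul_smul_comm, ← intervalIntegral.integral_const_mul, ← Finset.smul_sum]
  have hint (i j : Fin n) : IntervalIntegrable (fun θ => Λ i j * f θ j i) volume 0 (2 * π) :=
    (hf j i).const_mul _
  have hint_sum (i : Fin n) :
      IntervalIntegrable (fun θ => ∑ j, Λ i j * f θ j i) volume 0 (2 * π) := by
    simpa only [Finset.sum_fn] using IntervalIntegrable.sum Finset.univ fun j _ => hint i j
  rw [intervalIntegral.integral_finsetSum fun i _ => hint_sum i]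
  simp only [intervalIntegral.integral_finsetSum fun j _ => hint _ j]

lemma trace_mul_mul_conjTranspose {m : Type*} [Fintype m] (Λ : Matrix m m ℂ)
    (v : Matrix m (Fin 1) ℂ) : (Λ * (v * vᴴ)).trace = (vᴴ * Λ * v) 0 0 := by
  rw [← Matrix.mul_assoc, Matrix.trace_mul_comm, ← Matrix.mul_assoc]
  simp [Matrix.trace]

lemma sInt_ofReal (f : ℝ → ℝ) : sInt (fun θ => (f θ : ℂ)) = sIntR f := by
  rw [sInt, sIntR, intervalIntegral.integral_ofReal, Complex.real_smul, Complex.ofReal_mul]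

theorem stmt6_general {n : ℕ} (A : Mat n) (B : Vec n) (Ψ : ℝ → ℝ) (Λ : Mat n)
    (hA : IsStable A)
    (hΨc : Continuous Ψ)
    (hq : ∀ θ, 0 < (quad A B Λ θ).re)
    (hmom : moment A B Ψ Λ = 1) :
    Λ.trace = ((sIntR Ψ : ℝ) : ℂ) ∧ (sIntR Ψ = 1 → Λ.trace = 1) := by
  have hq0 (θ : ℝ) : quad A B Λ θ ≠ 0 := fun h => by simpa [h] using hq θ
  have hcont : Continuous fun θ => ((Ψ θ : ℂ) / quad A B Λ θ) • (Gm A B θ * (Gm A B θ)ᴴ) :=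
    ((Complex.continuous_ofReal.comp hΨc).div (continuous_quad hA B Λ) hq0).smul
      ((continuous_Gm hA B).matrix_mul (continuous_Gm hA B).matrix_conjTranspose)
  have htrace : Λ.trace = sIntR Ψ := calc
    Λ.trace = (Λ * moment A B Ψ Λ).trace := by rw [hmom, mul_one]
    _ = sInt fun θ => (Ψ θ : ℂ) := by
      rw [moment, trace_mul_mInt Λ fun i j => (hcont.matrix_elem i j).intervalIntegrable _ _]
      congr 1
      funext θ
      rw [Matrix.mul_smul, Matrix.trace_smul, trace_mul_mul_conjTranspose, smul_eq_mul,
        ← quad, div_mul_cancel₀ _ (hq0 θ)]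
    _ = sIntR Ψ := sInt_ofReal Ψ
  exact ⟨htrace, fun h => by rw [htrace, h, Complex.ofReal_one]⟩

/-- if G*Λ∘G > 0 on the circle and ∫ G (Ψ/(G*Λ∘G)) G* = I, then
tr Λ∘ = ∫ Ψ; in particular tr Λ∘ = 1 when ∫ Ψ = 1. -/
theorem stmt6 {n : ℕ} (A : Mat n) (B : Vec n) (Ψ : ℝ → ℝ) (Λ : Mat n)
    (hA : IsStable A) (hR : Reachable A B)
    (hΨc : Continuous Ψ) (hΨpos : ∀ θ, 0 < Ψ θ)
    (hΛ : Λ.IsHermitian)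
    (hq : ∀ θ, 0 < (quad A B Λ θ).re)
    (hmom : moment A B Ψ Λ = 1) :
    Λ.trace = ((sIntR Ψ : ℝ) : ℂ) ∧ (sIntR Ψ = 1 → Λ.trace = 1) :=
  stmt6_general A B Ψ Λ hA hΨc hq hmom
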